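/- arXiv:2307.14166 — 6 statements merged into one kernel-verified Lean document; each statement's English description precedes it below -/
import Mathlib

section
/- Let C: Σ_{i∈N} a_i ℓ_i ≥ b be a normalized pseudo-Boolean constraint and d a positive integer with d not dividing b. Then every total {0,1}-assignment satisfying C also satisfies the Mixed Integer Rounding (MIR) cut of C with divisor d, namely Σ_{i∈I_1} ⌈a_i/d⌉ ℓ_i + Σ_{i∈I_2} (⌊a_i/d⌋ + f(a_i/d)/f(b/d)) ℓ_i ≥ ⌈b/d⌉, where f(x)=x−⌊x⌋, I_1 = {i : f(a_i/d) ≥ f(b/d) or f(a_i/d)=0}, and I_2 = {i : 0 < f(a_i/d) < f(b/d)}. -/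
namespace PB

/-- The {0,1}-value of a literal with polarity `pol` when its variable has value `v`. -/
def litVal (pol v : Bool) : ℤ := if v = pol then 1 else 0

/-- The total assignment `x` satisfies the constraint `Σ_i a_i ℓ_i ≥ b`
(integer coefficients). -/
def Satisfies {ι : Type*} [Fintype ι] (a : ι → ℤ) (pol : ι → Bool) (b : ℤ)
    (x : ι → Bool) : Prop :=
  b ≤ ∑ i, a i * litVal (pol i) (x i)

/-- The total assignment `x` satisfies the rational-coefficient constraint
`Σ_i c_i ℓ_i ≥ q`. -/
def SatisfiesQ {ι : Type*} [Fintype ι] (c : ι → ℚ) (pol : ι → Bool) (q : ℚ)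
    (x : ι → Bool) : Prop :=
  q ≤ ∑ i, c i * (litVal (pol i) (x i) : ℚ)

/-- The coefficient of the literal `ℓ_i` in the MIR cut of `Σ_i a_i ℓ_i ≥ b` with
divisor `d`, where `f(x) = x - ⌊x⌋`: it is `⌈a_i/d⌉` if `f(a_i/d) ≥ f(b/d)` or
`f(a_i/d) = 0` (the set `I₁`), and `⌊a_i/d⌋ + f(a_i/d)/f(b/d)` otherwise (the set
`I₂`, i.e. `0 < f(a_i/d) < f(b/d)`). -/
def mirCoef {ι : Type*} (a : ι → ℤ) (b d : ℤ) (i : ι) : ℚ :=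
  if Int.fract ((b : ℚ) / (d : ℚ)) ≤ Int.fract ((a i : ℚ) / (d : ℚ))
      ∨ Int.fract ((a i : ℚ) / (d : ℚ)) = 0 then
    (⌈(a i : ℚ) / (d : ℚ)⌉ : ℚ)
  else
    (⌊(a i : ℚ) / (d : ℚ)⌋ : ℚ) +
      Int.fract ((a i : ℚ) / (d : ℚ)) / Int.fract ((b : ℚ) / (d : ℚ))

/-- Core single-row MIR argument: if `X` is an integer, `Y ≥ 0`, `X + Y ≥ q`,
and `f = fract q ∈ (0,1)`, then `X + Y/f ≥ ⌈q⌉`. -/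
lemma mir_core (X : ℤ) (Y q f : ℚ) (hf0 : 0 < f) (hf1 : f < 1)
    (hq : ((⌊q⌋ : ℤ) : ℚ) + f = q) (hY : 0 ≤ Y) (hXY : q ≤ (X : ℚ) + Y) :
    ((⌈q⌉ : ℤ) : ℚ) ≤ (X : ℚ) + Y / f := by
  by_cases hc : (⌈q⌉ : ℤ) ≤ X
  · have h1 : ((⌈q⌉ : ℤ) : ℚ) ≤ (X : ℚ) := by exact_mod_cast hc
    have h2 : 0 ≤ Y / f := div_nonneg hY hf0.le
    linarith
  · push_neg at hc
    have hcle : ⌈q⌉ ≤ ⌊q⌋ + 1 := Int.ceil_le_floor_add_one q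
    have hceil : (⌈q⌉ : ℤ) = ⌊q⌋ + 1 := by
      have h2 : ((⌊q⌋ : ℤ) : ℚ) < q := by linarith
      have h3 : q ≤ ((⌈q⌉ : ℤ) : ℚ) := Int.le_ceil q
      have h4 : ⌊q⌋ < ⌈q⌉ := by exact_mod_cast lt_of_lt_of_le h2 h3
      omega
    have hXq : X ≤ ⌊q⌋ := by omega
    have hXqQ : (X : ℚ) ≤ ((⌊q⌋ : ℤ) : ℚ) := by exact_mod_cast hXq
    have hY2 : f * (((⌊q⌋ : ℤ) : ℚ) + 1 - X) ≤ Y := by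
      nlinarith [mul_nonneg (sub_nonneg.2 hf1.le) (sub_nonneg.2 hXqQ)]
    have h5 : (((⌊q⌋ : ℤ) : ℚ) + 1 - X) ≤ Y / f := by
      rw [le_div_iff₀ hf0]
      nlinarith [hY2]
    have h6 : ((⌈q⌉ : ℤ) : ℚ) = ((⌊q⌋ : ℤ) : ℚ) + 1 := by exact_mod_cast hceil
    linarith

/-- Let `Σ_i a_i ℓ_i ≥ b` be a normalized PB constraint and `d` a
positive integer not dividing `b`.  Every total {0,1}-assignment satisfying the
constraint also satisfies its Mixed Integer Rounding (MIR) cut with divisor `d`,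
namely `Σ_{i∈I₁} ⌈a_i/d⌉ ℓ_i + Σ_{i∈I₂} (⌊a_i/d⌋ + f(a_i/d)/f(b/d)) ℓ_i ≥ ⌈b/d⌉`. -/
theorem mir_cut_valid {ι : Type*} [Fintype ι]
    (a : ι → ℤ) (pol : ι → Bool) (b : ℤ) (d : ℤ)
    (ha : ∀ i, 0 ≤ a i) (hb : 0 ≤ b) (hd : 0 < d) (hnd : ¬ d ∣ b) :
    ∀ x : ι → Bool, Satisfies a pol b x →
      SatisfiesQ (mirCoef a b d) pol ((⌈(b : ℚ) / (d : ℚ)⌉ : ℤ) : ℚ) x := by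
  classical
  intro x hx
  have hdQ : (0:ℚ) < (d:ℚ) := by exact_mod_cast hd
  have hfadd : ((⌊(b:ℚ)/(d:ℚ)⌋ : ℤ) : ℚ) + Int.fract ((b:ℚ)/(d:ℚ)) = (b:ℚ)/(d:ℚ) :=
    Int.floor_add_fract _
  have hf0 : 0 < Int.fract ((b:ℚ)/(d:ℚ)) := by
    rcases (Int.fract_nonneg ((b:ℚ)/(d:ℚ))).lt_or_eq with h | h
    · exact h
    · exfalso; apply hnd
      refine ⟨⌊(b:ℚ)/(d:ℚ)⌋, ?_⟩
      have h1 : (b:ℚ)/(d:ℚ) = ((⌊(b:ℚ)/(d:ℚ)⌋ : ℤ) : ℚ) := by linarith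
      have h3 : (b:ℚ) = (d:ℚ) * ((⌊(b:ℚ)/(d:ℚ)⌋ : ℤ) : ℚ) := by
        field_simp at h1
        linarith
      exact_mod_cast h3
  have hf1 : Int.fract ((b:ℚ)/(d:ℚ)) < 1 := Int.fract_lt_one _
  -- literal values are in [0,1]
  have hL0 : ∀ i, (0:ℚ) ≤ (litVal (pol i) (x i) : ℚ) := by
    intro i; unfold litVal; split <;> norm_num
  -- the decomposition of the MIR coefficient
  have hcoef : ∀ i, mirCoef a b d i =
      (if Int.fract ((b:ℚ)/(d:ℚ)) ≤ Int.fract ((a i:ℚ)/(d:ℚ))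
          ∨ Int.fract ((a i:ℚ)/(d:ℚ)) = 0 then ((⌈(a i:ℚ)/(d:ℚ)⌉ : ℤ) : ℚ)
        else ((⌊(a i:ℚ)/(d:ℚ)⌋ : ℤ) : ℚ)) +
      (if Int.fract ((b:ℚ)/(d:ℚ)) ≤ Int.fract ((a i:ℚ)/(d:ℚ))
          ∨ Int.fract ((a i:ℚ)/(d:ℚ)) = 0 then 0
        else Int.fract ((a i:ℚ)/(d:ℚ))) / Int.fract ((b:ℚ)/(d:ℚ)) := by
    intro i
    unfold mirCoef
    split_ifs with h
    · simp
    · rfl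
  -- the integer part and the fractional part
  set X : ℤ := ∑ i, (if Int.fract ((b:ℚ)/(d:ℚ)) ≤ Int.fract ((a i:ℚ)/(d:ℚ))
          ∨ Int.fract ((a i:ℚ)/(d:ℚ)) = 0 then ⌈(a i:ℚ)/(d:ℚ)⌉
        else ⌊(a i:ℚ)/(d:ℚ)⌋) * litVal (pol i) (x i) with hX
  set Y : ℚ := ∑ i, (if Int.fract ((b:ℚ)/(d:ℚ)) ≤ Int.fract ((a i:ℚ)/(d:ℚ))
          ∨ Int.fract ((a i:ℚ)/(d:ℚ)) = 0 then 0
        else Int.fract ((a i:ℚ)/(d:ℚ))) * (litVal (pol i) (x i) : ℚ) with hY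
  have hXcast : (X : ℚ) = ∑ i,
      (if Int.fract ((b:ℚ)/(d:ℚ)) ≤ Int.fract ((a i:ℚ)/(d:ℚ))
          ∨ Int.fract ((a i:ℚ)/(d:ℚ)) = 0 then ((⌈(a i:ℚ)/(d:ℚ)⌉ : ℤ) : ℚ)
        else ((⌊(a i:ℚ)/(d:ℚ)⌋ : ℤ) : ℚ)) * (litVal (pol i) (x i) : ℚ) := by
    rw [hX]
    push_cast [apply_ite (fun z : ℤ => (z : ℚ))]
    ring
  have hY0 : 0 ≤ Y := by
    rw [hY]
    refine Finset.sum_nonneg fun i _ => mul_nonneg ?_ (hL0 i)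
    split
    · exact le_rfl
    · exact Int.fract_nonneg _
  have hxQ : (b:ℚ) ≤ ∑ i, (a i : ℚ) * (litVal (pol i) (x i) : ℚ) := by
    exact_mod_cast hx
  have hXY : (b:ℚ)/(d:ℚ) ≤ (X : ℚ) + Y := by
    have h1 : (b:ℚ)/(d:ℚ) ≤ ∑ i, ((a i:ℚ)/(d:ℚ)) * (litVal (pol i) (x i) : ℚ) := by
      have h2 : ∑ i, ((a i:ℚ)/(d:ℚ)) * (litVal (pol i) (x i) : ℚ)
          = (∑ i, (a i : ℚ) * (litVal (pol i) (x i) : ℚ)) / (d:ℚ) := by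
        rw [Finset.sum_div]
        exact Finset.sum_congr rfl fun i _ => by ring
      rw [h2]
      gcongr
    have h3 : ∑ i, ((a i:ℚ)/(d:ℚ)) * (litVal (pol i) (x i) : ℚ) ≤ (X : ℚ) + Y := by
      rw [hXcast, hY, ← Finset.sum_add_distrib]
      refine Finset.sum_le_sum fun i _ => ?_
      rw [← add_mul]
      refine mul_le_mul_of_nonneg_right ?_ (hL0 i)
      split_ifs with h
      · have := Int.le_ceil ((a i:ℚ)/(d:ℚ))
        linarith
      · exact le_of_eq (Int.floor_add_fract _).symm
    linarith
  -- assemble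
  unfold SatisfiesQ
  have hsum : ∑ i, mirCoef a b d i * (litVal (pol i) (x i) : ℚ) = (X : ℚ) + Y / Int.fract ((b:ℚ)/(d:ℚ)) := by
    rw [hXcast, hY, Finset.sum_div, ← Finset.sum_add_distrib]
    refine Finset.sum_congr rfl fun i _ => ?_
    rw [hcoef i]
    ring
  rw [hsum]
  exact mir_core X Y ((b:ℚ)/(d:ℚ)) (Int.fract ((b:ℚ)/(d:ℚ))) hf0 hf1 hfadd hY0 hXY

end PB
end

section
/- Let ρ be a partial assignment and C_reason: Σ_{i∈N} a_i ℓ_i ≥ b a normalized pseudo-Boolean constraint that propagates a literal ℓ_r to 1 under ρ (i.e., ℓ_r is free and slack(C_reason,ρ) < a_r), and assume slack(C_reason,ρ) > 0. Then the constraint obtained from C_reason by first weakening on every non-falsified literal other than ℓ_r (i.e., on all ℓ_i with i ≠ r and ρ(ℓ_i) ≠ 0) and then applying the Saturation cut has slack exactly 0 under ρ. -/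
namespace PB

/-- The slack of the constraint `Σ_i a_i ℓ_i ≥ b` under the partial assignment `ρ`. -/
def slack {ι : Type*} [Fintype ι] (a : ι → ℤ) (pol : ι → Bool) (b : ℤ)
    (ρ : ι → Option Bool) : ℤ :=
  (∑ i ∈ Finset.univ.filter fun i => ρ i ≠ some (!(pol i)), a i) - b

/-- Coefficients after weakening `Σ_i a_i ℓ_i ≥ b` on every literal, other than `ℓ_r`,
that is not falsified under `ρ`: these coefficients are set to `0`. -/
def weakCoef {ι : Type*} [DecidableEq ι] (a : ι → ℤ) (pol : ι → Bool) (ρ : ι → Option Bool)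
    (r : ι) (i : ι) : ℤ :=
  if i ≠ r ∧ ρ i ≠ some (!(pol i)) then 0 else a i

/-- Degree after weakening `Σ_i a_i ℓ_i ≥ b` on every literal, other than `ℓ_r`,
that is not falsified under `ρ`: each weakened literal lowers the degree by its
coefficient. -/
def weakRhs {ι : Type*} [Fintype ι] [DecidableEq ι] (a : ι → ℤ) (pol : ι → Bool) (b : ℤ)
    (ρ : ι → Option Bool) (r : ι) : ℤ :=
  b - ∑ i ∈ Finset.univ.filter fun i => i ≠ r ∧ ρ i ≠ some (!(pol i)), a i

/-- Let `ρ` be a partial assignment and `C : Σ_i a_i ℓ_i ≥ b` a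
normalized PB constraint that propagates the literal `ℓ_r` to 1 under `ρ` (i.e. `ℓ_r`
is free and `slack(C,ρ) < a_r`), and assume `slack(C,ρ) > 0`.  Then the constraint
obtained from `C` by first weakening on every non-falsified literal other than `ℓ_r`
and then applying the Saturation cut has slack exactly `0` under `ρ`. -/
theorem saturation_reduction_slack_zero {ι : Type*} [Fintype ι] [DecidableEq ι]
    (a : ι → ℤ) (pol : ι → Bool) (b : ℤ) (ρ : ι → Option Bool) (r : ι)
    (ha : ∀ i, 0 ≤ a i) (hb : 0 ≤ b)
    (hfree : ρ r = none)
    (hprop : slack a pol b ρ < a r)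
    (hpos : 0 < slack a pol b ρ) :
    slack (fun i => min (weakCoef a pol ρ r i) (weakRhs a pol b ρ r)) pol
      (weakRhs a pol b ρ r) ρ = 0 := by
  classical
  set W := weakRhs a pol b ρ r with hW
  have hrS : ρ r ≠ some (!(pol r)) := by simp [hfree]
  -- split the slack sum at r
  have hsplit : (∑ i ∈ Finset.univ.filter fun i => ρ i ≠ some (!(pol i)), a i)
      = a r + ∑ i ∈ Finset.univ.filter fun i => i ≠ r ∧ ρ i ≠ some (!(pol i)), a i := by
    have h1 : (Finset.univ.filter fun i => ρ i ≠ some (!(pol i)))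
        = insert r (Finset.univ.filter fun i => i ≠ r ∧ ρ i ≠ some (!(pol i))) := by
      ext i
      by_cases hi : i = r <;> simp [hi, hrS]
    rw [h1, Finset.sum_insert (by simp)]
  have hWe : W = a r - slack a pol b ρ := by
    rw [hW]
    unfold weakRhs slack
    rw [hsplit]; ring
  have hWpos : 0 < W := by rw [hWe]; omega
  have hWlt : W ≤ a r := by rw [hWe]; omega
  unfold slack
  have hsum : (∑ i ∈ Finset.univ.filter fun i => ρ i ≠ some (!(pol i)),
      min (weakCoef a pol ρ r i) W) = W := by
    rw [Finset.sum_eq_single_of_mem r (by simp [hrS])]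
    · unfold weakCoef; simp [min_eq_right hWlt]
    · intro i hi hir
      simp only [Finset.mem_filter] at hi
      unfold weakCoef
      rw [if_pos ⟨hir, hi.2⟩]
      simp [min_eq_left (le_of_lt hWpos)]
  rw [hsum]; ring


end PB
end

section
/- Let ρ be a partial assignment and C_reason: Σ_{i∈N} a_i ℓ_i ≥ b a normalized pseudo-Boolean constraint that propagates a literal ℓ_r to 1 under ρ (i.e., ℓ_r is free and slack(C_reason,ρ) < a_r). Let W := {i ∈ N : ρ(ℓ_i) ≠ 0 and a_r does not divide a_i}. Then the constraint obtained from C_reason by weakening on all literals ℓ_i with i ∈ W and then applying the Division cut with divisor d = a_r has slack at most 0 under ρ. -/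
/-!
Write `d = a_r`. On the non-falsified literals, weakening keeps exactly the coefficients
divisible by `d`, so after division they contribute `M / d`, where `M` is their sum, while the
degree becomes `⌈(b - N) / d⌉` with `N` the weakened mass. Propagation says `M + N - b < d`,
i.e. `d (M / d - 1) < b - N`, hence `M / d ≤ ⌈(b - N) / d⌉`.
-/

namespace PB

/-- Coefficients after weakening `Σ_i a_i ℓ_i ≥ b` on every literal in
`W = {i : ρ(ℓ_i) ≠ 0 and a_r ∤ a_i}`: these coefficients are set to `0`. -/
def weakWCoef {ι : Type*} (a : ι → ℤ) (pol : ι → Bool) (ρ : ι → Option Bool)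
    (r : ι) (i : ι) : ℤ :=
  if ρ i ≠ some (!(pol i)) ∧ ¬ a r ∣ a i then 0 else a i

/-- Degree after weakening `Σ_i a_i ℓ_i ≥ b` on every literal in
`W = {i : ρ(ℓ_i) ≠ 0 and a_r ∤ a_i}`. -/
def weakWRhs {ι : Type*} [Fintype ι] (a : ι → ℤ) (pol : ι → Bool) (b : ℤ)
    (ρ : ι → Option Bool) (r : ι) : ℤ :=
  b - ∑ i ∈ Finset.univ.filter fun i => ρ i ≠ some (!(pol i)) ∧ ¬ a r ∣ a i, a i

theorem ceil_intCast_div_of_dvd {α : Type*} [Field α] [LinearOrder α] [IsStrictOrderedRing α]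
    [FloorRing α] {m d : ℤ} (h : d ∣ m) : ⌈(m : α) / d⌉ = m / d := by
  obtain ⟨c, rfl⟩ := h
  rcases eq_or_ne d 0 with rfl | hd
  · simp
  · rw [Int.mul_ediv_cancel_left _ hd]
    push_cast
    rw [mul_div_cancel_left₀ _ (Int.cast_ne_zero.2 hd), Int.ceil_intCast]

theorem le_ceil_div_of_mul_sub_one_lt {α : Type*} [Field α] [LinearOrder α]
    [IsStrictOrderedRing α] [FloorRing α] {d k c : ℤ} (hd : 0 < d) (h : d * (k - 1) < c) :
    k ≤ ⌈(c : α) / d⌉ := by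
  rw [Int.le_ceil_iff, lt_div_iff₀ (Int.cast_pos.2 hd)]
  exact_mod_cast (by linarith : (k - 1) * d < c)

section Reduction

variable {ι : Type*} (a : ι → ℤ) (pol : ι → Bool) (ρ : ι → Option Bool) (r : ι)

def nonFalsified [Fintype ι] : Finset ι :=
  Finset.univ.filter fun i => ρ i ≠ some (!(pol i))

theorem slack_eq_sum_nonFalsified_sub [Fintype ι] (b : ℤ) :
    slack a pol b ρ = ∑ i ∈ nonFalsified pol ρ, a i - b :=
  rfl

theorem weakWRhs_eq [Fintype ι] (b : ℤ) :
    weakWRhs a pol b ρ r = b - ∑ i ∈ (nonFalsified pol ρ).filter (¬ a r ∣ a ·), a i := by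
  rw [weakWRhs, nonFalsified, Finset.filter_filter]

theorem ceil_weakWCoef_div_of_ne {i : ι} (hi : ρ i ≠ some (!(pol i))) :
    ⌈(weakWCoef a pol ρ r i : ℚ) / a r⌉ = if a r ∣ a i then a i / a r else 0 := by
  by_cases hdvd : a r ∣ a i
  · rw [weakWCoef, if_neg fun h => h.2 hdvd, if_pos hdvd]
    exact ceil_intCast_div_of_dvd hdvd
  · simp [weakWCoef, hi, hdvd]

theorem sum_ceil_weakWCoef_div [Fintype ι] :
    ∑ i ∈ nonFalsified pol ρ, ⌈(weakWCoef a pol ρ r i : ℚ) / a r⌉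
      = (∑ i ∈ (nonFalsified pol ρ).filter (a r ∣ a ·), a i) / a r := by
  rw [Int.sum_div fun i hi => (Finset.mem_filter.1 hi).2, Finset.sum_filter]
  exact Finset.sum_congr rfl fun i hi =>
    ceil_weakWCoef_div_of_ne a pol ρ r (Finset.mem_filter.1 hi).2

end Reduction

theorem division_reduction_slack_nonpos_general {ι : Type*} [Fintype ι]
    (a : ι → ℤ) (pol : ι → Bool) (b : ℤ) (ρ : ι → Option Bool) (r : ι)
    (hprop : slack a pol b ρ < a r)
    (har : 0 < a r) :
    slack (fun i => ⌈(weakWCoef a pol ρ r i : ℚ) / (a r : ℚ)⌉) pol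
      ⌈(weakWRhs a pol b ρ r : ℚ) / (a r : ℚ)⌉ ρ ≤ 0 := by
  set S := nonFalsified pol ρ
  set M := ∑ i ∈ S.filter (a r ∣ a ·), a i
  have hM : a r * (M / a r) = M :=
    Int.mul_ediv_cancel' (Finset.dvd_sum fun i hi => (Finset.mem_filter.1 hi).2)
  have hsplit : M + ∑ i ∈ S.filter (¬ a r ∣ a ·), a i = ∑ i ∈ S, a i :=
    Finset.sum_filter_add_sum_filter_not S _ a
  have hceil : M / a r ≤ ⌈(weakWRhs a pol b ρ r : ℚ) / a r⌉ := by
    refine le_ceil_div_of_mul_sub_one_lt har ?_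
    rw [weakWRhs_eq, mul_sub, hM]
    rw [slack_eq_sum_nonFalsified_sub] at hprop
    linarith
  rw [slack_eq_sum_nonFalsified_sub, sum_ceil_weakWCoef_div]
  linarith

/-- Let `ρ` be a partial assignment and `C : Σ_i a_i ℓ_i ≥ b` a
normalized PB constraint that propagates the literal `ℓ_r` to 1 under `ρ` (i.e. `ℓ_r`
is free and `slack(C,ρ) < a_r`).  Then the constraint obtained from `C` by weakening on
all literals `ℓ_i` with `i ∈ W := {i : ρ(ℓ_i) ≠ 0 and a_r ∤ a_i}` and then applying the
Division cut with divisor `d = a_r` (which must be a positive integer) has slack at most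
`0` under `ρ`. -/
theorem division_reduction_slack_nonpos {ι : Type*} [Fintype ι]
    (a : ι → ℤ) (pol : ι → Bool) (b : ℤ) (ρ : ι → Option Bool) (r : ι)
    (ha : ∀ i, 0 ≤ a i) (hb : 0 ≤ b)
    (hfree : ρ r = none)
    (hprop : slack a pol b ρ < a r)
    (har : 0 < a r) :
    slack (fun i => ⌈(weakWCoef a pol ρ r i : ℚ) / (a r : ℚ)⌉) pol
      ⌈(weakWRhs a pol b ρ r : ℚ) / (a r : ℚ)⌉ ρ ≤ 0 :=
  division_reduction_slack_nonpos_general a pol b ρ r hprop har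

end PB
end

section
/- Let ρ be a partial assignment and C_reason: Σ_{i∈N} a_i ℓ_i ≥ b a normalized pseudo-Boolean constraint that propagates a literal ℓ_r to 1 under ρ (i.e., ℓ_r is free and slack(C_reason,ρ) < a_r). Let W := {i ∈ N : ρ(ℓ_i) ≠ 0 and a_r does not divide a_i}. Then the constraint obtained from C_reason by weakening on all literals ℓ_i with i ∈ W and then applying the MIR cut with divisor d = a_r has slack at most 0 under ρ (where the slack of a rational-coefficient constraint under ρ is defined as the sum of the coefficients of non-falsified literals minus the right-hand side). -/
namespace PB

/-- The slack of a rational-coefficient constraint `Σ_i c_i ℓ_i ≥ q` under `ρ`: the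
sum of the coefficients of the non-falsified literals minus the right-hand side. -/
def slackQ {ι : Type*} [Fintype ι] (c : ι → ℚ) (pol : ι → Bool) (q : ℚ)
    (ρ : ι → Option Bool) : ℚ :=
  (∑ i ∈ Finset.univ.filter fun i => ρ i ≠ some (!(pol i)), c i) - q

/-- Let `ρ` be a partial assignment and `C : Σ_i a_i ℓ_i ≥ b` a
normalized PB constraint that propagates the literal `ℓ_r` to 1 under `ρ` (i.e. `ℓ_r`
is free and `slack(C,ρ) < a_r`).  Then the constraint obtained from `C` by weakening on
all literals `ℓ_i` with `i ∈ W := {i : ρ(ℓ_i) ≠ 0 and a_r ∤ a_i}` and then applying the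
MIR cut with divisor `d = a_r` (a positive integer) has slack at most `0` under `ρ`. -/
theorem mir_reduction_slack_nonpos {ι : Type*} [Fintype ι]
    (a : ι → ℤ) (pol : ι → Bool) (b : ℤ) (ρ : ι → Option Bool) (r : ι)
    (ha : ∀ i, 0 ≤ a i) (hb : 0 ≤ b)
    (hfree : ρ r = none)
    (hprop : slack a pol b ρ < a r)
    (har : 0 < a r) :
    slackQ (mirCoef (weakWCoef a pol ρ r) (weakWRhs a pol b ρ r) (a r)) pol
      ((⌈(weakWRhs a pol b ρ r : ℚ) / (a r : ℚ)⌉ : ℤ) : ℚ) ρ ≤ 0 := by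
  classical
  set d := a r with hd
  set b' := weakWRhs a pol b ρ r with hb'def
  set C : ℤ := ⌈(b' : ℚ) / (d : ℚ)⌉ with hC
  set S := Finset.univ.filter (fun i => ρ i ≠ some (!(pol i))) with hS
  have hdne : (d : ℚ) ≠ 0 := by
    exact_mod_cast har.ne'
  have hd0 : (0:ℚ) < (d:ℚ) := by exact_mod_cast har
  -- each coefficient on S is divisible and mirCoef is exact division
  have hdvd : ∀ i ∈ S, d ∣ weakWCoef a pol ρ r i := by
    intro i hi
    by_cases h : d ∣ a i
    · have : weakWCoef a pol ρ r i = a i := by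
        simp [weakWCoef, h, ← hd]
      rw [this]; exact h
    · have hiS : ρ i ≠ some (!(pol i)) := by
        simpa [hS] using (Finset.mem_filter.mp hi).2
      have : weakWCoef a pol ρ r i = 0 := by
        simp [weakWCoef, hiS, h, ← hd]
      simp [this]
  have hcoef : ∀ i ∈ S, mirCoef (weakWCoef a pol ρ r) b' d i
      = (weakWCoef a pol ρ r i : ℚ) / d := by
    intro i hi
    obtain ⟨k, hk⟩ := hdvd i hi
    have hval : ((weakWCoef a pol ρ r i : ℚ)) / d = (k : ℚ) := by
      rw [hk]; push_cast; field_simp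
    unfold mirCoef
    rw [hval]
    simp [Int.fract_intCast]
  -- sum of coefficients
  set s : ℤ := ∑ i ∈ S, weakWCoef a pol ρ r i with hsdef
  have hsumQ : (∑ i ∈ S, mirCoef (weakWCoef a pol ρ r) b' d i) = (s : ℚ) / d := by
    rw [Finset.sum_congr rfl hcoef, hsdef]
    push_cast
    rw [Finset.sum_div]
  -- s is divisible by d
  have hsdvd : d ∣ s := Finset.dvd_sum hdvd
  -- s - b' = slack
  have hsb : s - b' = slack a pol b ρ := by
    have h1 : s = (∑ i ∈ S, a i)
        - ∑ i ∈ Finset.univ.filter (fun i => ρ i ≠ some (!(pol i)) ∧ ¬ a r ∣ a i), a i := by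
      have : ∀ i ∈ S, weakWCoef a pol ρ r i
          = a i - (if ¬ a r ∣ a i then a i else 0) := by
        intro i hi
        have hiS : ρ i ≠ some (!(pol i)) := by
          simpa [hS] using (Finset.mem_filter.mp hi).2
        by_cases h : a r ∣ a i <;> simp [weakWCoef, hiS, h]
      rw [hsdef, Finset.sum_congr rfl this, Finset.sum_sub_distrib]
      congr 1
      rw [← Finset.sum_filter, hS, Finset.filter_filter]
    rw [h1, hb'def, weakWRhs, slack]
    ring
  have hslt : s - b' < d := by rw [hsb]; exact hprop
  -- b' ≤ d * C
  have hbC : b' ≤ d * C := by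
    have h1 : (b' : ℚ) / d ≤ (C : ℚ) := Int.le_ceil _
    have h2 : (b' : ℚ) ≤ (d : ℚ) * C := by
      rw [div_le_iff₀ hd0] at h1; linarith
    exact_mod_cast h2
  -- hence s ≤ d * C
  have hsC : s ≤ d * C := by
    obtain ⟨k, hk⟩ := hsdvd
    have : d * k < d * (C + 1) := by
      rw [← hk]; nlinarith
    have hkC : k < C + 1 := lt_of_mul_lt_mul_left this har.le
    rw [hk]
    exact mul_le_mul_of_nonneg_left (by omega) har.le
  -- finish
  have : slackQ (mirCoef (weakWCoef a pol ρ r) b' d) pol ((C : ℤ) : ℚ) ρ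
      = (s : ℚ) / d - C := by
    rw [slackQ, ← hS, hsumQ]
  rw [this]
  have : (s : ℚ) / d ≤ (C : ℚ) := by
    rw [div_le_iff₀ hd0]
    have : (s:ℚ) ≤ (d:ℚ) * C := by exact_mod_cast hsC
    linarith
  linarith

end PB
end

section
/- Let ρ be a partial assignment and C_reason: Σ_{i∈N} a_i ℓ_i ≥ b a normalized pseudo-Boolean constraint that propagates the literal ℓ_r to 1 under ρ, with slack(C_reason,ρ) > 0. Let C'_reason be the clausal reason, i.e., the linearized clause ℓ_r + Σ_{j : ρ(ℓ_j)=0} ℓ_j ≥ 1, and let C''_reason be the constraint obtained from C_reason by weakening on all non-falsified literals other than ℓ_r and then applying the Saturation cut. Then C''_reason implies C'_reason: every total {0,1}-assignment satisfying C''_reason also satisfies C'_reason. -/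
namespace PB

/-- Let `ρ` be a partial assignment and `C : Σ_i a_i ℓ_i ≥ b` a
normalized PB constraint that propagates `ℓ_r` to 1 under `ρ` (i.e. `ℓ_r` is free and
`slack(C,ρ) < a_r`), with `slack(C,ρ) > 0`.  Let `C'` be the clausal reason, i.e. the
linearized clause `ℓ_r + Σ_{j : ρ(ℓ_j)=0} ℓ_j ≥ 1`, and let `C''` be the constraint
obtained from `C` by weakening on all non-falsified literals other than `ℓ_r` and then
applying the Saturation cut.  Then every total {0,1}-assignment satisfying `C''` also
satisfies `C'`. -/
theorem saturation_reduction_implies_clausal_reason {ι : Type*} [Fintype ι]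
    [DecidableEq ι]
    (a : ι → ℤ) (pol : ι → Bool) (b : ℤ) (ρ : ι → Option Bool) (r : ι)
    (ha : ∀ i, 0 ≤ a i) (hb : 0 ≤ b)
    (hfree : ρ r = none)
    (hprop : slack a pol b ρ < a r)
    (hpos : 0 < slack a pol b ρ) :
    ∀ x : ι → Bool,
      Satisfies (fun i => min (weakCoef a pol ρ r i) (weakRhs a pol b ρ r)) pol
        (weakRhs a pol b ρ r) x →
      Satisfies (fun i => if i = r ∨ ρ i = some (!(pol i)) then 1 else 0) pol 1 x := by
  intro x hx
  set B := weakRhs a pol b ρ r with hBdef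
  have hsetEq : (Finset.univ.filter fun i => ρ i ≠ some (!(pol i)))
      = insert r (Finset.univ.filter fun i => i ≠ r ∧ ρ i ≠ some (!(pol i))) := by
    ext i
    simp only [Finset.mem_filter, Finset.mem_insert, Finset.mem_univ, true_and]
    constructor
    · intro h
      by_cases hir : i = r
      · exact Or.inl hir
      · exact Or.inr ⟨hir, h⟩
    · rintro (rfl | ⟨_, h⟩)
      · rw [hfree]; simp
      · exact h
  have hnotmem : r ∉ Finset.univ.filter fun i => i ≠ r ∧ ρ i ≠ some (!(pol i)) := by
    simp
  have hBval : B = a r - slack a pol b ρ := by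
    rw [hBdef]
    unfold weakRhs slack
    rw [hsetEq, Finset.sum_insert hnotmem]
    ring
  have hB : 0 < B := by rw [hBval]; linarith
  have hlv : ∀ i, litVal (pol i) (x i) = 0 ∨ litVal (pol i) (x i) = 1 := by
    intro i; unfold litVal; split <;> simp
  have hterm : ∀ i, min (weakCoef a pol ρ r i) B * litVal (pol i) (x i)
      ≤ B * ((if i = r ∨ ρ i = some (!(pol i)) then (1:ℤ) else 0) * litVal (pol i) (x i)) := by
    intro i
    by_cases hP : i = r ∨ ρ i = some (!(pol i))
    · rw [if_pos hP, one_mul]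
      rcases hlv i with h | h
      · rw [h]; simp
      · rw [h, mul_one, mul_one]
        exact min_le_right _ _
    · rw [if_neg hP, zero_mul, mul_zero]
      push_neg at hP
      have : weakCoef a pol ρ r i = 0 := by
        unfold weakCoef
        rw [if_pos ⟨hP.1, hP.2⟩]
      rw [this, min_eq_left hB.le, zero_mul]
  have hsum : B ≤ B * ∑ i, (if i = r ∨ ρ i = some (!(pol i)) then (1:ℤ) else 0) * litVal (pol i) (x i) := by
    calc B ≤ ∑ i, min (weakCoef a pol ρ r i) B * litVal (pol i) (x i) := hx
    _ ≤ ∑ i, B * ((if i = r ∨ ρ i = some (!(pol i)) then (1:ℤ) else 0) * litVal (pol i) (x i)) :=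
        Finset.sum_le_sum fun i _ => hterm i
    _ = B * ∑ i, (if i = r ∨ ρ i = some (!(pol i)) then (1:ℤ) else 0) * litVal (pol i) (x i) := by
        rw [Finset.mul_sum]
  unfold Satisfies
  nlinarith [hsum, hB]


end PB
end

section
/- Let C: Σ_{i∈N} a_i ℓ_i ≥ b be a normalized pseudo-Boolean constraint and d a positive integer with d not dividing b. Let C' be the Division cut of C with divisor d and C'' the MIR cut of C with divisor d. Then C'' implies C': the two constraints have the same right-hand side ⌈b/d⌉, the coefficient of each literal ℓ_i in C'' is less than or equal to its coefficient in C', and consequently every total {0,1}-assignment satisfying C'' also satisfies C'. -/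
namespace PB

/-- Let `C : Σ_i a_i ℓ_i ≥ b` be a normalized PB constraint and `d` a
positive integer not dividing `b`.  Let `C'` be the Division cut of `C` with divisor `d`
and `C''` the MIR cut of `C` with divisor `d`.  Then `C''` implies `C'`: both have the
same right-hand side `⌈b/d⌉`, the coefficient of every literal in `C''` is at most its
coefficient `⌈a_i/d⌉` in `C'`, and consequently every total {0,1}-assignment satisfying
`C''` also satisfies `C'`. -/
theorem mir_dominates_division {ι : Type*} [Fintype ι]
    (a : ι → ℤ) (pol : ι → Bool) (b : ℤ) (d : ℤ)
    (ha : ∀ i, 0 ≤ a i) (hb : 0 ≤ b) (hd : 0 < d) (hnd : ¬ d ∣ b) :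
    ((⌈(b : ℚ) / (d : ℚ)⌉ : ℤ) : ℚ) = ((⌈(b : ℚ) / (d : ℚ)⌉ : ℤ) : ℚ)
    ∧ (∀ i, mirCoef a b d i ≤ ((⌈(a i : ℚ) / (d : ℚ)⌉ : ℤ) : ℚ))
    ∧ ∀ x : ι → Bool,
        SatisfiesQ (mirCoef a b d) pol ((⌈(b : ℚ) / (d : ℚ)⌉ : ℤ) : ℚ) x →
        SatisfiesQ (fun i => ((⌈(a i : ℚ) / (d : ℚ)⌉ : ℤ) : ℚ)) pol
          ((⌈(b : ℚ) / (d : ℚ)⌉ : ℤ) : ℚ) x := by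
  have key : ∀ i, mirCoef a b d i ≤ ((⌈(a i : ℚ) / (d : ℚ)⌉ : ℤ) : ℚ) := by
    intro i
    unfold mirCoef
    split
    · exact le_rfl
    · rename_i h
      push_neg at h
      obtain ⟨h1, h2⟩ := h
      have hfb : 0 < Int.fract ((b : ℚ) / (d : ℚ)) := lt_of_le_of_lt (Int.fract_nonneg _) h1
      have hfa : 0 < Int.fract ((a i : ℚ) / (d : ℚ)) :=
        lt_of_le_of_ne (Int.fract_nonneg _) (Ne.symm h2)
      have hceil : (⌊(a i : ℚ) / (d : ℚ)⌋ : ℚ) + 1 ≤ (⌈(a i : ℚ) / (d : ℚ)⌉ : ℚ) := by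
        have hlt : ⌊(a i : ℚ) / (d : ℚ)⌋ < ⌈(a i : ℚ) / (d : ℚ)⌉ := by
          have : ((⌊(a i : ℚ) / (d : ℚ)⌋ : ℚ)) < (a i : ℚ) / (d : ℚ) := by
            have := Int.fract ((a i : ℚ) / (d : ℚ))
            unfold Int.fract at hfa; linarith
          exact_mod_cast this.trans_le (Int.le_ceil _)
        exact_mod_cast hlt
      refine le_trans ?_ hceil
      have : Int.fract ((a i : ℚ) / (d : ℚ)) / Int.fract ((b : ℚ) / (d : ℚ)) ≤ 1 :=
        (div_le_one hfb).mpr h1.le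
      linarith
  refine ⟨rfl, key, ?_⟩
  intro x hx
  unfold SatisfiesQ at hx ⊢
  refine le_trans hx (Finset.sum_le_sum ?_)
  intro i _
  have hv : (0 : ℚ) ≤ litVal (pol i) (x i) := by unfold litVal; split <;> norm_num
  exact mul_le_mul_of_nonneg_right (key i) hv

end PB
end
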